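/- For (w, V) define the worst-case interference power WIP(w, V) = sup over all (Δl_1, …, Δl_J) with Δl_jᴴ Δl_j ≤ υ_j² of Σ_{j=1}^{J} (l̂_j + Δl_j)ᴴ (w wᴴ + V)(l̂_j + Δl_j), and for (W̄, V̄, ξ) define WIP'(W̄, V̄) analogously with w wᴴ + V replaced by W̄ + V̄. Then the infimum over (w, V) ∈ F of the worst-case interference power leakage-to-transmit power ratio WIP(w, V)/(‖w‖² + Tr(V)) equals the infimum over (W̄, V̄, ξ) ∈ F' of WIP'(W̄, V̄); moreover, for every (w, V) ∈ F the point (ξ₀ w wᴴ, ξ₀ V, ξ₀) with ξ₀ = 1/(‖w‖² + Tr(V)) lies in F' and satisfies WIP(w, V)/(‖w‖² + Tr(V)) = WIP'(ξ₀ w wᴴ, ξ₀ V). -/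

import Mathlib

open Matrix
open scoped ComplexOrder

/-!
Charnes–Cooper transformation. Apart from semidefiniteness, the rank condition and the
normalization `Tr W̄ + Tr V̄ = 1`, the constraints of `F'` are positively homogeneous in
`(W̄, V̄, ξ)`, and so is `WIP`; at `ξ = 1` and `W̄ = w wᴴ` they are exactly the constraints of
`F`. Scaling `(w wᴴ, V, 1)` by `p⁻¹`, where `p = ‖w‖² + Tr V > 0` (the SINR constraint forces
`w ≠ 0`), therefore maps `F` into `F'` and turns the ratio `WIP / p` into `WIP'`. Conversely
`1 ≤ Pmax ξ` forces `ξ > 0`, and a rank-one positive semidefinite `W̄` is `u uᴴ`, so scaling a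
point of `F'` by `ξ⁻¹` gives a point of `F` with the same objective value. Both problems thus
take the infimum over the same set of values.
-/

/-- The original feasible set `F`: pairs `(w, V)` with `V` Hermitian PSD satisfying the
SINR constraint C1 of the desired receiver, the robust eavesdropper constraints C2 and C3,
and the power constraint C4. -/
def FeasOrig {NT K J : ℕ} (h : Fin NT → ℂ)
    (ghat : Fin (K - 1) → Fin NT → ℂ) (lhat : Fin J → Fin NT → ℂ)
    (Γreq σz2 Pmax σPU2 : ℝ) (Γtol σzk2 ε : Fin (K - 1) → ℝ) (ΓtolPU υ : Fin J → ℝ)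
    (w : Fin NT → ℂ) (V : Matrix (Fin NT) (Fin NT) ℂ) : Prop :=
  V.PosSemidef ∧
  Γreq * ((Matrix.vecMulVec h (star h) * V).trace.re + σz2) ≤
      (star w ⬝ᵥ Matrix.vecMulVec h (star h) *ᵥ w).re ∧
  (∀ k, ∀ Δg : Fin NT → ℂ, (star Δg ⬝ᵥ Δg).re ≤ ε k ^ 2 →
      ‖star (ghat k + Δg) ⬝ᵥ w‖ ^ 2 ≤
        Γtol k * ((star (ghat k + Δg) ⬝ᵥ V *ᵥ (ghat k + Δg)).re + σzk2 k)) ∧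
  (∀ j, ∀ Δl : Fin NT → ℂ, (star Δl ⬝ᵥ Δl).re ≤ υ j ^ 2 →
      ‖star (lhat j + Δl) ⬝ᵥ w‖ ^ 2 ≤
        ΓtolPU j * ((star (lhat j + Δl) ⬝ᵥ V *ᵥ (lhat j + Δl)).re + σPU2)) ∧
  (star w ⬝ᵥ w).re + V.trace.re ≤ Pmax

/-- The Charnes–Cooper transformed feasible set `F'`: triples `(W̄, V̄, ξ)` with `W̄, V̄`
Hermitian PSD, `ξ ≥ 0`, `rank W̄ = 1`, the transformed constraints, the transformed power
constraint, and the normalization `Tr(W̄) + Tr(V̄) = 1`. -/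
def FeasTrans {NT K J : ℕ} (h : Fin NT → ℂ)
    (ghat : Fin (K - 1) → Fin NT → ℂ) (lhat : Fin J → Fin NT → ℂ)
    (Γreq σz2 Pmax σPU2 : ℝ) (Γtol σzk2 ε : Fin (K - 1) → ℝ) (ΓtolPU υ : Fin J → ℝ)
    (Wb Vb : Matrix (Fin NT) (Fin NT) ℂ) (ξ : ℝ) : Prop :=
  Wb.PosSemidef ∧ Vb.PosSemidef ∧ 0 ≤ ξ ∧ Wb.rank = 1 ∧
  Γreq * ((Matrix.vecMulVec h (star h) * Vb).trace.re + σz2 * ξ) ≤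
      (Matrix.vecMulVec h (star h) * Wb).trace.re ∧
  (∀ k, ∀ Δg : Fin NT → ℂ, (star Δg ⬝ᵥ Δg).re ≤ ε k ^ 2 →
      (star (ghat k + Δg) ⬝ᵥ Wb *ᵥ (ghat k + Δg)).re ≤
        Γtol k * ((star (ghat k + Δg) ⬝ᵥ Vb *ᵥ (ghat k + Δg)).re + σzk2 k * ξ)) ∧
  (∀ j, ∀ Δl : Fin NT → ℂ, (star Δl ⬝ᵥ Δl).re ≤ υ j ^ 2 →
      (star (lhat j + Δl) ⬝ᵥ Wb *ᵥ (lhat j + Δl)).re ≤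
        ΓtolPU j * ((star (lhat j + Δl) ⬝ᵥ Vb *ᵥ (lhat j + Δl)).re + σPU2 * ξ)) ∧
  Wb.trace.re + Vb.trace.re ≤ Pmax * ξ ∧
  Wb.trace.re + Vb.trace.re = 1

/-- The worst-case total interference power leaked by the matrix `M` (here `M = w wᴴ + V`
or `M = W̄ + V̄`) over all admissible channel uncertainties. -/
noncomputable def WIP {NT J : ℕ} (lhat : Fin J → Fin NT → ℂ)
    (υ : Fin J → ℝ) (M : Matrix (Fin NT) (Fin NT) ℂ) : ℝ :=
  sSup {t : ℝ | ∃ Δl : Fin J → Fin NT → ℂ,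
    (∀ j, (star (Δl j) ⬝ᵥ Δl j).re ≤ υ j ^ 2) ∧
    t = ∑ j, (star (lhat j + Δl j) ⬝ᵥ M *ᵥ (lhat j + Δl j)).re}

namespace Matrix

variable {m n : Type*} [Fintype n]

lemma rank_vecMulVec_eq_one {K : Type*} [Field K] {w : m → K} {v : n → K} (hw : w ≠ 0)
    (hv : v ≠ 0) : (vecMulVec w v).rank = 1 := by
  refine le_antisymm (rank_vecMulVec_le w v) (Nat.one_le_iff_ne_zero.mpr ?_)
  classical
  obtain ⟨i, hi⟩ := Function.ne_iff.mp hv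
  rw [rank, Ne, Submodule.finrank_eq_zero, ← Ne, Submodule.ne_bot_iff]
  refine ⟨_, LinearMap.mem_range_self _ (Pi.single i 1), ?_⟩
  rw [mulVecLin_apply, vecMulVec_mulVec, dotProduct_single_one, op_smul_eq_smul]
  exact smul_ne_zero hi hw

lemma mul_vecMulVec_star_mul_conjTranspose {R : Type*} [Semiring R] [StarRing R]
    (M : Matrix m n R) (a : n → R) :
    M * vecMulVec a (star a) * Mᴴ = vecMulVec (M *ᵥ a) (star (M *ᵥ a)) := by
  rw [mul_vecMulVec, vecMulVec_mul, star_mulVec]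

lemma trace_mul_vecMulVec_star {R : Type*} [CommSemiring R] [StarRing R] (M : Matrix n n R)
    (w : n → R) : (M * vecMulVec w (star w)).trace = star w ⬝ᵥ M *ᵥ w := by
  rw [mul_vecMulVec, trace_vecMulVec, dotProduct_comm]

lemma trace_vecMulVec_star {R : Type*} [CommSemiring R] [StarRing R] (w : n → R) :
    (vecMulVec w (star w)).trace = star w ⬝ᵥ w := by
  rw [trace_vecMulVec, dotProduct_comm]

lemma vecMulVec_sqrt_smul {c : ℝ} (hc : 0 ≤ c) (u : n → ℂ) :
    vecMulVec ((√c : ℂ) • u) (star ((√c : ℂ) • u)) = (c : ℂ) • vecMulVec u (star u) := by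
  rw [star_smul, smul_vecMulVec, vecMulVec_smul, smul_smul, Complex.star_def, Complex.conj_ofReal,
    ← Complex.ofReal_mul, Real.mul_self_sqrt hc]

lemma re_star_dotProduct_vecMulVec_mulVec (w x : n → ℂ) :
    (star x ⬝ᵥ vecMulVec w (star w) *ᵥ x).re = ‖star x ⬝ᵥ w‖ ^ 2 := by
  rw [vecMulVec_mulVec, op_smul_eq_smul, dotProduct_smul, smul_eq_mul, star_dotProduct,
    Complex.star_def, Complex.conj_mul', ← Complex.ofReal_pow, Complex.ofReal_re]

lemma re_star_dotProduct_real_smul_mulVec (c : ℝ) (M : Matrix n n ℂ) (x : n → ℂ) :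
    (star x ⬝ᵥ ((c : ℂ) • M) *ᵥ x).re = c * (star x ⬝ᵥ M *ᵥ x).re := by
  rw [smul_mulVec, dotProduct_smul, smul_eq_mul, Complex.re_ofReal_mul]

lemma re_trace_real_smul (c : ℝ) (M : Matrix n n ℂ) :
    ((c : ℂ) • M).trace.re = c * M.trace.re := by
  rw [trace_smul, smul_eq_mul, Complex.re_ofReal_mul]

section RCLike

variable {𝕜 : Type*} [RCLike 𝕜]

lemma PosSemidef.exists_eq_vecMulVec_star_of_rank_eq_one [DecidableEq n] {M : Matrix n n 𝕜}
    (hM : M.PosSemidef) (hrank : M.rank = 1) : ∃ u : n → 𝕜, M = vecMulVec u (star u) := by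
  have hH := hM.isHermitian
  obtain ⟨⟨i₀, _⟩, hunique⟩ : ∃ i : {i // hH.eigenvalues i ≠ 0}, ∀ j, j = i := by
    rw [← Fintype.card_eq_one_iff, ← hH.rank_eq_card_non_zero_eigs, hrank]
  have hzero : ∀ j ≠ i₀, hH.eigenvalues j = 0 := fun j hj => by
    by_contra hj'
    exact hj (congrArg Subtype.val (hunique ⟨j, hj'⟩))
  -- only the `i₀`-th eigenvalue survives, so the diagonal factor of the spectral decomposition
  -- is `a aᴴ`
  set a : n → 𝕜 := Pi.single i₀ (Real.sqrt (hH.eigenvalues i₀) : 𝕜)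
  have hdiag : diagonal (RCLike.ofReal ∘ hH.eigenvalues) = vecMulVec a (star a) := by
    ext i j
    simp only [diagonal_apply, vecMulVec_apply, a, Pi.star_apply, Pi.single_apply]
    split_ifs <;> subst_vars <;>
      simp_all [← RCLike.ofReal_mul, Real.mul_self_sqrt (hM.eigenvalues_nonneg _)]
  refine ⟨hH.eigenvectorUnitary *ᵥ a, ?_⟩
  conv_lhs => rw [hH.spectral_theorem, Unitary.conjStarAlgAut_apply, hdiag]
  rw [star_eq_conjTranspose, mul_vecMulVec_star_mul_conjTranspose]

end RCLike

end Matrix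

lemma WIP_real_smul {NT J : ℕ} (lhat : Fin J → Fin NT → ℂ) (υ : Fin J → ℝ)
    (M : Matrix (Fin NT) (Fin NT) ℂ) {c : ℝ} (hc : 0 ≤ c) :
    WIP lhat υ ((c : ℂ) • M) = c * WIP lhat υ M := by
  rw [WIP, WIP, ← smul_eq_mul, ← Real.sSup_smul_of_nonneg hc]
  congr 1
  ext t
  simp only [Set.mem_smul_set, Set.mem_ofPred_eq, smul_eq_mul,
    re_star_dotProduct_real_smul_mulVec]
  constructor
  · rintro ⟨Δl, hΔl, rfl⟩
    exact ⟨_, ⟨Δl, hΔl, rfl⟩, Finset.mul_sum _ _ _⟩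
  · rintro ⟨_, ⟨Δl, hΔl, rfl⟩, rfl⟩
    exact ⟨Δl, hΔl, Finset.mul_sum _ _ _⟩

lemma WIP_div_eq_WIP_inv_smul {NT J : ℕ} (lhat : Fin J → Fin NT → ℂ) (υ : Fin J → ℝ)
    {w : Fin NT → ℂ} {V : Matrix (Fin NT) (Fin NT) ℂ} (hV : V.PosSemidef) :
    WIP lhat υ (vecMulVec w (star w) + V) / ((star w ⬝ᵥ w).re + V.trace.re) =
      WIP lhat υ ((((star w ⬝ᵥ w).re + V.trace.re)⁻¹ : ℂ) • vecMulVec w (star w) +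
        (((star w ⬝ᵥ w).re + V.trace.re)⁻¹ : ℂ) • V) := by
  have hp : 0 ≤ (star w ⬝ᵥ w).re + V.trace.re :=
    add_nonneg (Complex.nonneg_iff.mp (dotProduct_star_self_nonneg w)).1
      (Complex.nonneg_iff.mp hV.trace_nonneg).1
  rw [← Complex.ofReal_add, ← Complex.ofReal_inv, ← smul_add,
    WIP_real_smul _ _ _ (inv_nonneg.mpr hp), div_eq_inv_mul]

section CharnesCooper

variable {NT K J : ℕ} (h : Fin NT → ℂ)
    (ghat : Fin (K - 1) → Fin NT → ℂ) (lhat : Fin J → Fin NT → ℂ)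
    (Γreq σz2 Pmax σPU2 : ℝ) (Γtol σzk2 ε : Fin (K - 1) → ℝ) (ΓtolPU υ : Fin J → ℝ)

/-- The constraints of `F'` that are positively homogeneous in `(W̄, V̄, ξ)`. -/
def HomogeneousConstraints (Wb Vb : Matrix (Fin NT) (Fin NT) ℂ) (ξ : ℝ) : Prop :=
  Γreq * ((Matrix.vecMulVec h (star h) * Vb).trace.re + σz2 * ξ) ≤
      (Matrix.vecMulVec h (star h) * Wb).trace.re ∧
  (∀ k, ∀ Δg : Fin NT → ℂ, (star Δg ⬝ᵥ Δg).re ≤ ε k ^ 2 →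
      (star (ghat k + Δg) ⬝ᵥ Wb *ᵥ (ghat k + Δg)).re ≤
        Γtol k * ((star (ghat k + Δg) ⬝ᵥ Vb *ᵥ (ghat k + Δg)).re + σzk2 k * ξ)) ∧
  (∀ j, ∀ Δl : Fin NT → ℂ, (star Δl ⬝ᵥ Δl).re ≤ υ j ^ 2 →
      (star (lhat j + Δl) ⬝ᵥ Wb *ᵥ (lhat j + Δl)).re ≤
        ΓtolPU j * ((star (lhat j + Δl) ⬝ᵥ Vb *ᵥ (lhat j + Δl)).re + σPU2 * ξ)) ∧
  Wb.trace.re + Vb.trace.re ≤ Pmax * ξ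

variable {h ghat lhat Γreq σz2 Pmax σPU2 Γtol σzk2 ε ΓtolPU υ}

lemma HomogeneousConstraints.real_smul {Wb Vb : Matrix (Fin NT) (Fin NT) ℂ} {ξ c : ℝ}
    (hc : 0 ≤ c)
    (hcon : HomogeneousConstraints h ghat lhat Γreq σz2 Pmax σPU2 Γtol σzk2 ε ΓtolPU υ Wb Vb ξ) :
    HomogeneousConstraints h ghat lhat Γreq σz2 Pmax σPU2 Γtol σzk2 ε ΓtolPU υ
      ((c : ℂ) • Wb) ((c : ℂ) • Vb) (c * ξ) := by
  obtain ⟨hsinr, hgk, hlj, hpow⟩ := hcon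
  simp only [HomogeneousConstraints, mul_smul_comm, re_trace_real_smul,
    re_star_dotProduct_real_smul_mulVec]
  refine ⟨?_, fun k Δg hΔg => ?_, fun j Δl hΔl => ?_, ?_⟩
  · linarith [mul_le_mul_of_nonneg_left hsinr hc]
  · linarith [mul_le_mul_of_nonneg_left (hgk k Δg hΔg) hc]
  · linarith [mul_le_mul_of_nonneg_left (hlj j Δl hΔl) hc]
  · linarith [mul_le_mul_of_nonneg_left hpow hc]

lemma feasOrig_iff {w : Fin NT → ℂ} {V : Matrix (Fin NT) (Fin NT) ℂ} :
    FeasOrig h ghat lhat Γreq σz2 Pmax σPU2 Γtol σzk2 ε ΓtolPU υ w V ↔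
      V.PosSemidef ∧ HomogeneousConstraints h ghat lhat Γreq σz2 Pmax σPU2 Γtol σzk2 ε ΓtolPU υ
        (vecMulVec w (star w)) V 1 := by
  simp only [FeasOrig, HomogeneousConstraints, mul_one, trace_mul_vecMulVec_star,
    re_star_dotProduct_vecMulVec_mulVec, trace_vecMulVec_star]

lemma feasTrans_iff {Wb Vb : Matrix (Fin NT) (Fin NT) ℂ} {ξ : ℝ} :
    FeasTrans h ghat lhat Γreq σz2 Pmax σPU2 Γtol σzk2 ε ΓtolPU υ Wb Vb ξ ↔
      Wb.PosSemidef ∧ Vb.PosSemidef ∧ 0 ≤ ξ ∧ Wb.rank = 1 ∧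
        HomogeneousConstraints h ghat lhat Γreq σz2 Pmax σPU2 Γtol σzk2 ε ΓtolPU υ Wb Vb ξ ∧
        Wb.trace.re + Vb.trace.re = 1 := by
  simp only [FeasTrans, HomogeneousConstraints, and_assoc]

lemma FeasOrig.ne_zero (hΓreq : 0 < Γreq) (hσz : 0 < σz2) {w : Fin NT → ℂ}
    {V : Matrix (Fin NT) (Fin NT) ℂ}
    (hF : FeasOrig h ghat lhat Γreq σz2 Pmax σPU2 Γtol σzk2 ε ΓtolPU υ w V) : w ≠ 0 := by
  rintro rfl
  obtain ⟨hV, hsinr, -⟩ := hF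
  have hHV : 0 ≤ (vecMulVec h (star h) * V).trace.re := by
    rw [trace_mul_comm, trace_mul_vecMulVec_star]
    exact hV.re_dotProduct_nonneg h
  simp only [star_zero, mulVec_zero, dotProduct_zero, Complex.zero_re] at hsinr
  linarith [mul_pos hΓreq (add_pos_of_nonneg_of_pos hHV hσz)]

lemma FeasOrig.transmitPower_pos (hΓreq : 0 < Γreq) (hσz : 0 < σz2) {w : Fin NT → ℂ}
    {V : Matrix (Fin NT) (Fin NT) ℂ}
    (hF : FeasOrig h ghat lhat Γreq σz2 Pmax σPU2 Γtol σzk2 ε ΓtolPU υ w V) :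
    0 < (star w ⬝ᵥ w).re + V.trace.re :=
  add_pos_of_pos_of_nonneg
    (Complex.pos_iff.mp (dotProduct_star_self_pos_iff.mpr (hF.ne_zero hΓreq hσz))).1
    (Complex.nonneg_iff.mp hF.1.trace_nonneg).1

lemma FeasOrig.feasTrans_inv_smul (hΓreq : 0 < Γreq) (hσz : 0 < σz2) {w : Fin NT → ℂ}
    {V : Matrix (Fin NT) (Fin NT) ℂ}
    (hF : FeasOrig h ghat lhat Γreq σz2 Pmax σPU2 Γtol σzk2 ε ΓtolPU υ w V) :
    FeasTrans h ghat lhat Γreq σz2 Pmax σPU2 Γtol σzk2 ε ΓtolPU υ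
      ((((star w ⬝ᵥ w).re + V.trace.re)⁻¹ : ℂ) • vecMulVec w (star w))
      ((((star w ⬝ᵥ w).re + V.trace.re)⁻¹ : ℂ) • V)
      ((star w ⬝ᵥ w).re + V.trace.re)⁻¹ := by
  have hp := hF.transmitPower_pos hΓreq hσz
  have hw := hF.ne_zero hΓreq hσz
  obtain ⟨hV, hcon⟩ := feasOrig_iff.mp hF
  rw [← Complex.ofReal_add, ← Complex.ofReal_inv]
  have hc : (0 : ℂ) ≤ (((star w ⬝ᵥ w).re + V.trace.re)⁻¹ : ℝ) :=
    Complex.zero_le_real.mpr (inv_nonneg.mpr hp.le)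
  refine feasTrans_iff.mpr ⟨(posSemidef_vecMulVec_self_star w).smul hc, hV.smul hc,
    inv_nonneg.mpr hp.le, ?_, by simpa using hcon.real_smul (inv_nonneg.mpr hp.le), ?_⟩
  · rw [rank_smul_of_mem_nonZeroDivisors _ (mem_nonZeroDivisors_of_ne_zero
      (Complex.ofReal_ne_zero.mpr (inv_ne_zero hp.ne'))),
      rank_vecMulVec_eq_one hw (star_ne_zero.mpr hw)]
  · rw [re_trace_real_smul, re_trace_real_smul, trace_vecMulVec_star, ← mul_add,
      inv_mul_cancel₀ hp.ne']

lemma FeasTrans.exists_feasOrig {Wb Vb : Matrix (Fin NT) (Fin NT) ℂ} {ξ : ℝ}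
    (hF : FeasTrans h ghat lhat Γreq σz2 Pmax σPU2 Γtol σzk2 ε ΓtolPU υ Wb Vb ξ) :
    ∃ w V, FeasOrig h ghat lhat Γreq σz2 Pmax σPU2 Γtol σzk2 ε ΓtolPU υ w V ∧
      WIP lhat υ (vecMulVec w (star w) + V) / ((star w ⬝ᵥ w).re + V.trace.re) =
        WIP lhat υ (Wb + Vb) := by
  obtain ⟨hW, hV, hξ, hrank, hcon, hnorm⟩ := feasTrans_iff.mp hF
  -- `ξ = 0` would give `1 = Tr W̄ + Tr V̄ ≤ Pmax * 0`
  have hξ_pos : 0 < ξ := hξ.lt_of_ne (by rintro rfl; linarith [hcon.2.2.2])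
  have hc : (0 : ℂ) ≤ (ξ⁻¹ : ℝ) := Complex.zero_le_real.mpr (inv_nonneg.mpr hξ)
  obtain ⟨u, rfl⟩ := hW.exists_eq_vecMulVec_star_of_rank_eq_one hrank
  have hww := vecMulVec_sqrt_smul (inv_nonneg.mpr hξ) u
  refine ⟨(√ξ⁻¹ : ℂ) • u, ((ξ⁻¹ : ℝ) : ℂ) • Vb, feasOrig_iff.mpr ⟨hV.smul hc, ?_⟩, ?_⟩
  · rw [hww, ← inv_mul_cancel₀ hξ_pos.ne']
    exact hcon.real_smul (inv_nonneg.mpr hξ)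
  · rw [← trace_vecMulVec_star, hww, ← Complex.add_re, ← trace_add, ← smul_add,
      re_trace_real_smul, trace_add, Complex.add_re, hnorm, mul_one,
      WIP_real_smul _ _ _ (inv_nonneg.mpr hξ), mul_div_cancel_left₀ _ (inv_ne_zero hξ_pos.ne')]

end CharnesCooper

theorem iptr_min_equiv_general {NT K J : ℕ} (h : Fin NT → ℂ)
    (ghat : Fin (K - 1) → Fin NT → ℂ) (lhat : Fin J → Fin NT → ℂ)
    (Γreq σz2 Pmax σPU2 : ℝ) (Γtol σzk2 ε : Fin (K - 1) → ℝ) (ΓtolPU υ : Fin J → ℝ)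
    (hΓreq : 0 < Γreq) (hσz : 0 < σz2) :
    (sInf {t : ℝ | ∃ w V, FeasOrig h ghat lhat Γreq σz2 Pmax σPU2 Γtol σzk2 ε ΓtolPU υ w V ∧
          t = WIP lhat υ (Matrix.vecMulVec w (star w) + V) /
              ((star w ⬝ᵥ w).re + V.trace.re)} =
      sInf {t : ℝ | ∃ Wb Vb ξ,
          FeasTrans h ghat lhat Γreq σz2 Pmax σPU2 Γtol σzk2 ε ΓtolPU υ Wb Vb ξ ∧
          t = WIP lhat υ (Wb + Vb)}) ∧
    (∀ w V, FeasOrig h ghat lhat Γreq σz2 Pmax σPU2 Γtol σzk2 ε ΓtolPU υ w V →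
        FeasTrans h ghat lhat Γreq σz2 Pmax σPU2 Γtol σzk2 ε ΓtolPU υ
          ((((star w ⬝ᵥ w).re + V.trace.re)⁻¹ : ℂ) • Matrix.vecMulVec w (star w))
          ((((star w ⬝ᵥ w).re + V.trace.re)⁻¹ : ℂ) • V)
          (((star w ⬝ᵥ w).re + V.trace.re)⁻¹) ∧
        WIP lhat υ (Matrix.vecMulVec w (star w) + V) /
            ((star w ⬝ᵥ w).re + V.trace.re) =
          WIP lhat υ
            ((((star w ⬝ᵥ w).re + V.trace.re)⁻¹ : ℂ) • Matrix.vecMulVec w (star w) +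
              (((star w ⬝ᵥ w).re + V.trace.re)⁻¹ : ℂ) • V)) := by
  refine ⟨congrArg sInf (Set.ext fun t => ⟨?_, ?_⟩),
    fun w V hF => ⟨hF.feasTrans_inv_smul hΓreq hσz, WIP_div_eq_WIP_inv_smul lhat υ hF.1⟩⟩
  · rintro ⟨w, V, hF, rfl⟩
    exact ⟨_, _, _, hF.feasTrans_inv_smul hΓreq hσz, WIP_div_eq_WIP_inv_smul lhat υ hF.1⟩
  · rintro ⟨Wb, Vb, ξ, hF, rfl⟩
    obtain ⟨w, V, hF', hobj⟩ := hF.exists_feasOrig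
    exact ⟨w, V, hF', hobj.symm⟩

/-- Equivalence of the worst-case interference power leakage-to-transmit power ratio
minimization problem and its Charnes–Cooper transformed version: the optimal values
coincide, and every feasible `(w, V)` yields a feasible transformed point with the same
objective value. -/
theorem iptr_min_equiv {NT K J : ℕ} (hNT : 1 ≤ NT) (h : Fin NT → ℂ)
    (ghat : Fin (K - 1) → Fin NT → ℂ) (lhat : Fin J → Fin NT → ℂ)
    (Γreq σz2 Pmax σPU2 : ℝ) (Γtol σzk2 ε : Fin (K - 1) → ℝ) (ΓtolPU υ : Fin J → ℝ)
    (hΓreq : 0 < Γreq) (hσz : 0 < σz2) (hPmax : 0 < Pmax) (hσPU : 0 < σPU2)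
    (hΓtol : ∀ k, 0 < Γtol k) (hσzk : ∀ k, 0 < σzk2 k) (hε : ∀ k, 0 < ε k)
    (hΓPU : ∀ j, 0 < ΓtolPU j) (hυ : ∀ j, 0 < υ j) :
    (sInf {t : ℝ | ∃ w V, FeasOrig h ghat lhat Γreq σz2 Pmax σPU2 Γtol σzk2 ε ΓtolPU υ w V ∧
          t = WIP lhat υ (Matrix.vecMulVec w (star w) + V) /
              ((star w ⬝ᵥ w).re + V.trace.re)} =
      sInf {t : ℝ | ∃ Wb Vb ξ,
          FeasTrans h ghat lhat Γreq σz2 Pmax σPU2 Γtol σzk2 ε ΓtolPU υ Wb Vb ξ ∧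
          t = WIP lhat υ (Wb + Vb)}) ∧
    (∀ w V, FeasOrig h ghat lhat Γreq σz2 Pmax σPU2 Γtol σzk2 ε ΓtolPU υ w V →
        FeasTrans h ghat lhat Γreq σz2 Pmax σPU2 Γtol σzk2 ε ΓtolPU υ
          ((((star w ⬝ᵥ w).re + V.trace.re)⁻¹ : ℂ) • Matrix.vecMulVec w (star w))
          ((((star w ⬝ᵥ w).re + V.trace.re)⁻¹ : ℂ) • V)
          (((star w ⬝ᵥ w).re + V.trace.re)⁻¹) ∧
        WIP lhat υ (Matrix.vecMulVec w (star w) + V) /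
            ((star w ⬝ᵥ w).re + V.trace.re) =
          WIP lhat υ
            ((((star w ⬝ᵥ w).re + V.trace.re)⁻¹ : ℂ) • Matrix.vecMulVec w (star w) +
              (((star w ⬝ᵥ w).re + V.trace.re)⁻¹ : ℂ) • V)) :=
  iptr_min_equiv_general h ghat lhat Γreq σz2 Pmax σPU2 Γtol σzk2 ε ΓtolPU υ hΓreq hσz
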